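/- Let A = [a_ij] ∈ ℂ^{n×n}, n ≥ 2, be a DD matrix. Then A is an H-matrix if and only if A has nonzero diagonal entries and T(A) is an interwoven set of indices for A. -/

import Mathlib

open scoped BigOperators

noncomputable section

/-- Deleted `i`-th row sum of `|A|`, restricted to the index set `S`
    (i.e. `r_i^S(A) = ∑_{j ∈ S \ {i}} |a_{ij}|`). -/
def rowSumOn {ι : Type*} [Fintype ι] [DecidableEq ι]
    (A : Matrix ι ι ℂ) (S : Finset ι) (i : ι) : ℝ :=
  ∑ j ∈ S.erase i, ‖A i j‖

/-- Deleted `i`-th row sum `r_i(A) = ∑_{j ≠ i} |a_{ij}|`. -/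
def rowSum {ι : Type*} [Fintype ι] [DecidableEq ι]
    (A : Matrix ι ι ℂ) (i : ι) : ℝ :=
  rowSumOn A Finset.univ i

/-- `A` is strictly diagonally dominant (SDD). -/
def IsSDD {ι : Type*} [Fintype ι] [DecidableEq ι] (A : Matrix ι ι ℂ) : Prop :=
  ∀ i, rowSum A i < ‖A i i‖

/-- `A` is diagonally dominant (DD). -/
def IsDD {ι : Type*} [Fintype ι] [DecidableEq ι] (A : Matrix ι ι ℂ) : Prop :=
  ∀ i, rowSum A i ≤ ‖A i i‖

/-- `A` is DD+ : diagonally dominant with at least one strictly dominant row. -/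
def IsDDplus {ι : Type*} [Fintype ι] [DecidableEq ι] (A : Matrix ι ι ℂ) : Prop :=
  IsDD A ∧ ∃ i, rowSum A i < ‖A i i‖

/-- `A` is an H-matrix: there is a diagonal matrix `D` with positive diagonal
    entries such that `A * D` is SDD. -/
def IsHMatrix {ι : Type*} [Fintype ι] [DecidableEq ι] (A : Matrix ι ι ℂ) : Prop :=
  ∃ d : ι → ℝ, (∀ i, 0 < d i) ∧ IsSDD (A * Matrix.diagonal fun i => (d i : ℂ))

/-- `T(A)`: the set of indices of non-SDD rows of `A`. -/
def TSet {ι : Type*} [Fintype ι] [DecidableEq ι] (A : Matrix ι ι ℂ) : Finset ι :=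
  Finset.univ.filter fun i => ‖A i i‖ ≤ rowSum A i

/-- The principal submatrix `A|_{M²}` of `A` corresponding to the index set `M`. -/
def subMat {ι : Type*} [Fintype ι] [DecidableEq ι]
    (A : Matrix ι ι ℂ) (M : Finset ι) : Matrix {i // i ∈ M} {i // i ∈ M} ℂ :=
  Matrix.of fun i j => A i.val j.val

/-- There exists a nonzero elements chain `a_{i₀i₁}, a_{i₁i₂}, …, a_{i_{r-1}i_r}`
    starting at `i₀` and ending at some `i_r ∉ T(A)`. -/
def HasChainOut {ι : Type*} [Fintype ι] [DecidableEq ι]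
    (A : Matrix ι ι ℂ) (i₀ : ι) : Prop :=
  ∃ (r : ℕ) (c : Fin (r + 1) → ι), 0 < r ∧ c 0 = i₀ ∧
    (∀ k : Fin r, A (c k.castSucc) (c k.succ) ≠ 0) ∧ c (Fin.last r) ∉ TSet A

/-- `S` is an interwoven set of indices for `A`: `S` is a proper subset of `N`
    and either `|S| ≤ 1`, or `|S| = s > 1` and there exist distinct
    `p₁,…,p_{s-1} ∈ S` and `q₁,…,q_{s-1}` with `q₁ ∈ N \ S`, `a_{p₁q₁} ≠ 0`, and
    `q_i ∈ (N \ S) ∪ {p₁,…,p_{i-1}}`, `a_{p_iq_i} ≠ 0` for `i = 2,…,s-1`. -/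
def Interwoven {ι : Type*} [Fintype ι] [DecidableEq ι]
    (A : Matrix ι ι ℂ) (S : Finset ι) : Prop :=
  S ⊂ Finset.univ ∧
    (S.card ≤ 1 ∨
      (1 < S.card ∧ ∃ p q : Fin (S.card - 1) → ι,
        Function.Injective p ∧ (∀ i, p i ∈ S) ∧
        ∀ i, A (p i) (q i) ≠ 0 ∧ (q i ∉ S ∨ ∃ j, j < i ∧ q i = p j)))

/-- The comparison matrix `ℳ(A)`. -/
def CompMat {ι : Type*} [Fintype ι] [DecidableEq ι] (A : Matrix ι ι ℂ) : Matrix ι ι ℝ :=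
  Matrix.of fun i j => if i = j then ‖A i i‖ else -‖A i j‖

/-! If `A D` is SDD, then every row `i ∈ T(A)` has a nonzero entry `a_ij` with `d_j < d_i`
(otherwise `|a_ii| d_i ≤ r_i(A) d_i ≤ Σ_{j≠i} |a_ij| d_j`). Listing `T(A)` by increasing `d`,
each element but the last therefore points out of `T(A)` or to an earlier element, which is
interwovenness.

Conversely, a nonzero diagonal and interwovenness give every row a path of nonzero entries to a
row outside `T(A)`. Such a path has an edge `a_pq ≠ 0` with `p ∈ T(A)`, `q ∉ T(A)`; scaling
column `q` by a factor slightly below `1` keeps `A` diagonally dominant and row `q` strict, and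
makes row `p` strict, so induction on `|T(A)|` ends with an SDD matrix. -/

open Finset Relation Matrix

theorem Relation.ReflTransGen.exists_rel_of_not {α : Type*} {r : α → α → Prop} {P : α → Prop}
    {a b : α} (h : ReflTransGen r a b) (ha : P a) (hb : ¬P b) : ∃ x y, P x ∧ ¬P y ∧ r x y := by
  induction h with
  | refl => exact absurd ha hb
  | @tail c e _ hce ih =>
    by_cases hc : P c
    exacts [⟨c, e, hc, hb, hce⟩, ih hc]

theorem Finset.exists_monotone_enum {ι α : Type*} [LinearOrder α] (S : Finset ι) (d : ι → α) :
    ∃ g : Fin S.card → ι, Function.Injective g ∧ Set.range g = S ∧ Monotone (d ∘ g) := by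
  let e : Fin S.card ≃ S := S.equivFin.symm
  let σ := Tuple.sort fun k => d (e k)
  refine ⟨fun k => e (σ k), Subtype.val_injective.comp (e.injective.comp σ.injective), ?_,
    Tuple.monotone_sort fun k => d (e k)⟩
  ext i
  refine ⟨?_, fun hi => ⟨σ.symm (e.symm ⟨i, hi⟩), by simp⟩⟩
  rintro ⟨k, rfl⟩
  exact (e (σ k)).2

/-- `HasChainOut` phrased through `ReflTransGen`; the two agree on the rows of `T(A)`. -/
def ReachesSDDRow {ι : Type*} [Fintype ι] [DecidableEq ι] (A : Matrix ι ι ℂ) (i : ι) : Prop :=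
  ∃ j ∉ TSet A, ReflTransGen (fun a b => A a b ≠ 0) i j

section

variable {ι : Type*} [Fintype ι] [DecidableEq ι] {A : Matrix ι ι ℂ}

theorem rowSum_nonneg (A : Matrix ι ι ℂ) (i : ι) : 0 ≤ rowSum A i :=
  sum_nonneg fun _ _ => norm_nonneg _

theorem mem_TSet {i : ι} : i ∈ TSet A ↔ ‖A i i‖ ≤ rowSum A i := by
  simp [TSet]

theorem notMem_TSet {i : ι} : i ∉ TSet A ↔ rowSum A i < ‖A i i‖ := by
  simp [TSet]

theorem IsHMatrix.of_isSDD (h : IsSDD A) : IsHMatrix A :=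
  ⟨1, fun _ => one_pos, by simpa using h⟩

theorem isSDD_of_TSet_eq_empty (h : TSet A = ∅) : IsSDD A :=
  fun i => notMem_TSet.1 (h ▸ notMem_empty i)

theorem norm_mul_diagonal_apply (A : Matrix ι ι ℂ) {w : ι → ℝ} (hw : ∀ j, 0 ≤ w j) (i j : ι) :
    ‖(A * diagonal fun k => (w k : ℂ)) i j‖ = ‖A i j‖ * w j := by
  rw [mul_diagonal, norm_mul, Complex.norm_real, Real.norm_of_nonneg (hw j)]

theorem rowSum_mul_diagonal (A : Matrix ι ι ℂ) {w : ι → ℝ} (hw : ∀ j, 0 ≤ w j) (i : ι) :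
    rowSum (A * diagonal fun k => (w k : ℂ)) i = ∑ j ∈ univ.erase i, ‖A i j‖ * w j :=
  sum_congr rfl fun j _ => norm_mul_diagonal_apply A hw i j

theorem rowSum_mul_diagonal_le (A : Matrix ι ι ℂ) {w : ι → ℝ} (hw₀ : ∀ j, 0 ≤ w j)
    (hw₁ : ∀ j, w j ≤ 1) (i : ι) : rowSum (A * diagonal fun k => (w k : ℂ)) i ≤ rowSum A i := by
  rw [rowSum_mul_diagonal A hw₀]
  exact sum_le_sum fun j _ => mul_le_of_le_one_right (norm_nonneg _) (hw₁ j)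

theorem rowSum_mul_diagonal_lt {w : ι → ℝ} (hw₀ : ∀ j, 0 ≤ w j) (hw₁ : ∀ j, w j ≤ 1)
    {i j : ι} (hji : j ≠ i) (hij : A i j ≠ 0) (hwj : w j < 1) :
    rowSum (A * diagonal fun k => (w k : ℂ)) i < rowSum A i := by
  rw [rowSum_mul_diagonal A hw₀]
  refine sum_lt_sum (fun k _ => mul_le_of_le_one_right (norm_nonneg _) (hw₁ k))
    ⟨j, mem_erase.2 ⟨hji, mem_univ j⟩, ?_⟩
  exact mul_lt_of_lt_one_right (norm_pos_iff.2 hij) hwj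

theorem IsHMatrix.of_mul_diagonal {w : ι → ℝ} (hw : ∀ j, 0 < w j)
    (h : IsHMatrix (A * diagonal fun j => (w j : ℂ))) : IsHMatrix A := by
  obtain ⟨d, hd, hSDD⟩ := h
  refine ⟨fun j => w j * d j, fun j => mul_pos (hw j) (hd j), ?_⟩
  simpa [Matrix.mul_assoc, diagonal_mul_diagonal] using hSDD

theorem IsHMatrix.diag_ne_zero (h : IsHMatrix A) (i : ι) : A i i ≠ 0 := by
  obtain ⟨d, hd, hSDD⟩ := h
  intro hii
  have := hSDD i
  rw [norm_mul_diagonal_apply A (fun j => (hd j).le), hii, norm_zero, zero_mul] at this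
  exact this.not_ge (rowSum_nonneg _ i)

theorem exists_lt_of_mem_TSet {d : ι → ℝ} (hd : ∀ i, 0 < d i)
    (hSDD : IsSDD (A * diagonal fun i => (d i : ℂ))) {i : ι} (hi : i ∈ TSet A) :
    ∃ j, A i j ≠ 0 ∧ d j < d i := by
  by_contra! hge
  have hSDDi := hSDD i
  rw [rowSum_mul_diagonal A (fun j => (hd j).le), norm_mul_diagonal_apply A (fun j => (hd j).le)]
    at hSDDi
  have : ‖A i i‖ * d i ≤ ∑ j ∈ univ.erase i, ‖A i j‖ * d j :=
    calc ‖A i i‖ * d i ≤ rowSum A i * d i := by gcongr; exacts [(hd i).le, mem_TSet.1 hi]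
      _ = ∑ j ∈ univ.erase i, ‖A i j‖ * d i := sum_mul _ _ _
      _ ≤ ∑ j ∈ univ.erase i, ‖A i j‖ * d j := sum_le_sum fun j _ => by
          by_cases hij : A i j = 0
          · simp [hij]
          · exact mul_le_mul_of_nonneg_left (hge j hij) (norm_nonneg _)
  linarith

theorem interwoven_of_forall_exists_lt [Nonempty ι] {α : Type*} [LinearOrder α] {S : Finset ι}
    (d : ι → α) (h : ∀ i ∈ S, ∃ j, A i j ≠ 0 ∧ d j < d i) : Interwoven A S := by
  refine ⟨ssubset_univ_iff.2 fun hS => ?_, ?_⟩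
  · obtain ⟨i, hi⟩ := Finite.exists_min d
    obtain ⟨j, -, hj⟩ := h i (hS ▸ mem_univ i)
    exact (hi j).not_gt hj
  rcases le_or_gt S.card 1 with hs | hs
  · exact Or.inl hs
  obtain ⟨g, hg_inj, hg_range, hg_mono⟩ := S.exists_monotone_enum d
  have hgS : ∀ k, g k ∈ S := fun k => by
    rw [← mem_coe, ← hg_range]
    exact Set.mem_range_self k
  let p : Fin (S.card - 1) → ι := fun m => g (Fin.castLE (Nat.sub_le _ _) m)
  choose q hq using fun m => h (p m) (hgS _)
  refine Or.inr ⟨hs, p, q, hg_inj.comp (Fin.castLE_injective _), fun m => hgS _,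
    fun m => ⟨(hq m).1, or_iff_not_imp_left.2 fun hqS => ?_⟩⟩
  -- `q m` comes before `p m` in the enumeration because `d (q m) < d (p m)`
  obtain ⟨k, hk⟩ : q m ∈ Set.range g := by
    rw [hg_range]
    exact not_not.1 hqS
  have hkm : k < Fin.castLE _ m := hg_mono.reflect_lt (by simpa [Function.comp, hk] using (hq m).2)
  have hkm' : k.val < m.val := hkm
  exact ⟨⟨k, by omega⟩, Fin.mk_lt_of_lt_val hkm', hk.symm⟩

theorem IsHMatrix.interwoven_TSet [Nonempty ι] (h : IsHMatrix A) : Interwoven A (TSet A) := by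
  obtain ⟨d, hd, hSDD⟩ := h
  exact interwoven_of_forall_exists_lt d fun i hi => exists_lt_of_mem_TSet hd hSDD hi

theorem reachesSDDRow_of_notMem {i : ι} (hi : i ∉ TSet A) : ReachesSDDRow A i :=
  ⟨i, hi, .refl⟩

theorem ReachesSDDRow.head {i j : ι} (hij : A i j ≠ 0) (hj : ReachesSDDRow A j) :
    ReachesSDDRow A i :=
  let ⟨k, hk, hjk⟩ := hj
  ⟨k, hk, hjk.head hij⟩

theorem exists_ne_ne_zero_of_mem_TSet {i : ι} (hi : i ∈ TSet A) (hii : A i i ≠ 0) :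
    ∃ j ≠ i, A i j ≠ 0 := by
  by_contra! h
  have : rowSum A i = 0 := sum_eq_zero fun j hj => by rw [h j (ne_of_mem_erase hj), norm_zero]
  exact (norm_pos_iff.2 hii).not_ge (this ▸ mem_TSet.1 hi)

theorem reachesSDDRow_of_card_sdiff_le_one (hdiag : ∀ i, A i i ≠ 0) {U : Finset ι}
    (hU : ∀ i ∈ U, ReachesSDDRow A i) (hcard : (TSet A \ U).card ≤ 1) (i : ι) :
    ReachesSDDRow A i := by
  by_cases hiT : i ∉ TSet A
  · exact reachesSDDRow_of_notMem hiT
  by_cases hiU : i ∈ U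
  · exact hU i hiU
  obtain ⟨j, hji, hij⟩ := exists_ne_ne_zero_of_mem_TSet (not_not.1 hiT) (hdiag i)
  refine ReachesSDDRow.head hij ?_
  by_cases hjT : j ∉ TSet A
  · exact reachesSDDRow_of_notMem hjT
  by_contra hj
  have hjU : j ∉ U := fun hjU => hj (hU j hjU)
  exact hji (card_le_one.1 hcard j (mem_sdiff.2 ⟨not_not.1 hjT, hjU⟩) i
    (mem_sdiff.2 ⟨not_not.1 hiT, hiU⟩))

theorem reachesSDDRow_of_interwoven (hdiag : ∀ i, A i i ≠ 0) (hI : Interwoven A (TSet A))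
    (i : ι) : ReachesSDDRow A i := by
  obtain ⟨-, hs | ⟨-, p, q, hp_inj, hpT, hpq⟩⟩ := hI
  · exact reachesSDDRow_of_card_sdiff_le_one hdiag (U := ∅) (by simp) (by simpa using hs) i
  have hp : ∀ m, ReachesSDDRow A (p m) := fun m => by
    induction m using WellFoundedLT.induction with
    | _ m ih =>
      rcases (hpq m).2 with hq | ⟨j, hjm, hqj⟩
      · exact ReachesSDDRow.head (hpq m).1 (reachesSDDRow_of_notMem hq)
      · exact ReachesSDDRow.head (hpq m).1 (hqj ▸ ih j hjm)
  refine reachesSDDRow_of_card_sdiff_le_one hdiag (U := univ.image p) (by simpa using hp) ?_ i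
  rw [card_sdiff_of_subset (image_subset_iff.2 fun m _ => hpT m), card_image_of_injective _ hp_inj,
    card_univ, Fintype.card_fin]
  omega

theorem exists_column_scaling (hDD : IsDD A) {q : ι} (hq : q ∉ TSet A) :
    ∃ w : ι → ℝ, (∀ j, 0 < w j) ∧ IsDD (A * diagonal fun j => (w j : ℂ)) ∧
      ∀ i ∈ TSet (A * diagonal fun j => (w j : ℂ)), i ∈ TSet A ∧ A i q = 0 := by
  have hq' := notMem_TSet.1 hq
  have hqq : 0 < ‖A q q‖ := (rowSum_nonneg A q).trans_lt hq'
  -- any `t ∈ (r_q(A) / |a_qq|, 1)` keeps row `q` strictly dominant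
  obtain ⟨t, ht₀, ht₁⟩ := exists_between ((div_lt_one hqq).2 hq')
  have ht : 0 < t := (div_nonneg (rowSum_nonneg A q) hqq.le).trans_lt ht₀
  let w : ι → ℝ := Function.update 1 q t
  have hw : ∀ j, 0 < w j := fun j => by
    by_cases hj : j = q <;> simp [w, hj, ht]
  have hw₁ : ∀ j, w j ≤ 1 := fun j => by
    by_cases hj : j = q <;> simp [w, hj, ht₁.le]
  have hw₀ : ∀ j, 0 ≤ w j := fun j => (hw j).le
  set A' := A * diagonal fun j => (w j : ℂ)
  have hdiag' : ∀ i ≠ q, ‖A' i i‖ = ‖A i i‖ := fun i hi => by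
    rw [norm_mul_diagonal_apply A hw₀]; simp [w, hi]
  have hqA' : rowSum A' q < ‖A' q q‖ :=
    calc rowSum A' q ≤ rowSum A q := rowSum_mul_diagonal_le A hw₀ hw₁ q
      _ < ‖A q q‖ * t := (div_lt_iff₀ hqq).1 ht₀ |>.trans_eq (mul_comm _ _)
      _ = ‖A' q q‖ := by rw [norm_mul_diagonal_apply A hw₀]; simp [w]
  refine ⟨w, hw, fun i => ?_, fun i hi => ?_⟩
  · by_cases hiq : i = q
    · exact hiq ▸ hqA'.le
    · exact (rowSum_mul_diagonal_le A hw₀ hw₁ i).trans ((hDD i).trans_eq (hdiag' i hiq).symm)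
  have hiq : i ≠ q := by
    rintro rfl
    exact (mem_TSet.1 hi).not_gt hqA'
  rw [mem_TSet, hdiag' i hiq] at hi
  refine ⟨mem_TSet.2 (hi.trans (rowSum_mul_diagonal_le A hw₀ hw₁ i)), ?_⟩
  by_contra hiq'
  have hwq : w q < 1 := by simpa [w] using ht₁
  exact (rowSum_mul_diagonal_lt hw₀ hw₁ hiq.symm hiq' hwq).not_ge ((hDD i).trans hi)

theorem isHMatrix_of_reachesSDDRow (hDD : IsDD A) (h : ∀ i, ReachesSDDRow A i) :
    IsHMatrix A := by
  induction hk : (TSet A).card using Nat.strong_induction_on generalizing A with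
  | _ k ih =>
    obtain hT | ⟨i, hi⟩ := (TSet A).eq_empty_or_nonempty
    · exact IsHMatrix.of_isSDD (isSDD_of_TSet_eq_empty hT)
    obtain ⟨j, hj, hij⟩ := h i
    obtain ⟨p, q, hp, hq, hpq⟩ := hij.exists_rel_of_not hi hj
    obtain ⟨w, hw, hDD', hT'⟩ := exists_column_scaling hDD hq
    refine IsHMatrix.of_mul_diagonal hw (ih _ ?_ hDD' (fun i => ?_) rfl)
    · refine hk ▸ card_lt_card (ssubset_iff_of_subset (fun i hi => (hT' i hi).1) |>.2 ?_)
      exact ⟨p, hp, fun hp' => hpq (hT' p hp').2⟩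
    · obtain ⟨j, hj, hij⟩ := h i
      refine ⟨j, fun hj' => hj (hT' j hj').1, ReflTransGen.mono (fun a b hab => ?_) i j hij⟩
      simpa [mul_diagonal, (hw b).ne'] using hab

end

/-- A DD matrix `A ∈ ℂⁿˣⁿ`, `n ≥ 2`, is an H-matrix iff `A`
has nonzero diagonal entries and `T(A)` is an interwoven set of indices
for `A`. -/
theorem dd_hmatrix_iff_interwoven (n : ℕ) (hn : 2 ≤ n)
    (A : Matrix (Fin n) (Fin n) ℂ) (hDD : IsDD A) :
    IsHMatrix A ↔ ((∀ i, A i i ≠ 0) ∧ Interwoven A (TSet A)) := by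
  have : Nonempty (Fin n) := ⟨⟨0, by omega⟩⟩
  constructor
  · intro hH
    exact ⟨IsHMatrix.diag_ne_zero hH, IsHMatrix.interwoven_TSet hH⟩
  · rintro ⟨hdiag, hI⟩
    exact isHMatrix_of_reachesSDDRow hDD (reachesSDDRow_of_interwoven hdiag hI)

end
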